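/- Let G be a group with x*y = y⁻¹xy, and let n ≥ 1. Then R1(x,y) = x(yx⁻¹)^(n+1) and R2(x,y) = x(y⁻¹x)ⁿ satisfy the five oriented singquandle axioms. -/

import Mathlib

/-!
`R1` and `R2` are words in their arguments, so they commute with every group homomorphism, in
particular with conjugation; this is exactly the content of the first two axioms. The other three
follow from `R1 x y = x y R2(x, y)⁻¹`, which is `mul_pow_mul` after inverting `R2`.
-/

namespace ConjSingquandle

variable {G : Type*} [Group G] (n : ℕ)

def R1 (x y : G) : G := x * (y * x⁻¹) ^ (n + 1)

def R2 (x y : G) : G := x * (y⁻¹ * x) ^ n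

theorem map_R1 {H : Type*} [Group H] (f : G →* H) (x y : G) :
    f (R1 n x y) = R1 n (f x) (f y) := by
  simp [R1]

theorem map_R2 {H : Type*} [Group H] (f : G →* H) (x y : G) :
    f (R2 n x y) = R2 n (f x) (f y) := by
  simp [R2]

theorem conj_R1 (g x y : G) : g * R1 n x y * g⁻¹ = R1 n (g * x * g⁻¹) (g * y * g⁻¹) :=
  map_R1 n (MulAut.conj g).toMonoidHom x y

theorem conj_R2 (g x y : G) : g * R2 n x y * g⁻¹ = R2 n (g * x * g⁻¹) (g * y * g⁻¹) :=
  map_R2 n (MulAut.conj g).toMonoidHom x y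

theorem R1_eq_mul_mul_inv_R2 (x y : G) : R1 n x y = x * y * (R2 n x y)⁻¹ := by
  have inv_R2 : (R2 n x y)⁻¹ = (x⁻¹ * y) ^ n * x⁻¹ := by
    simp [R2, ← inv_pow]
  rw [inv_R2, R1, pow_succ, mul_assoc x y, ← mul_assoc y, ← mul_pow_mul]
  group

theorem R2_eq_R1_conj (x y : G) : R2 n x y = R1 n y (y⁻¹ * x * y) := by
  rw [R1, R2, mul_inv_cancel_right, pow_succ', ← mul_assoc, mul_inv_cancel_left]

theorem R2_inv_mul_R1_mul_R2 (x y : G) :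
    (R2 n x y)⁻¹ * R1 n x y * R2 n x y = R2 n y (y⁻¹ * x * y) := by
  have conj_inv_pow : ((y⁻¹ * x * y)⁻¹ * y) ^ n = y⁻¹ * ((y⁻¹ * x) ^ n)⁻¹ * y := by
    rw [show (y⁻¹ * x * y)⁻¹ * y = y⁻¹ * (y⁻¹ * x)⁻¹ * y⁻¹⁻¹ by group, conj_pow, inv_pow,
      inv_inv]
  rw [R1_eq_mul_mul_inv_R2, R2, R2, conj_inv_pow]
  group

theorem inv_mul_R1_conj_eq_mul_inv_R2_conj (x y z : G) :
    x⁻¹ * (R1 n x z * y * (R1 n x z)⁻¹) * x = z * ((R2 n x z)⁻¹ * y * R2 n x z) * z⁻¹ := by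
  rw [R1_eq_mul_mul_inv_R2]
  group

end ConjSingquandle

theorem stmt_10_general (G : Type*) [Group G] (n : ℕ) :
    let star : G → G → G := fun x y => y⁻¹ * x * y
    let sbar : G → G → G := fun x y => y * x * y⁻¹
    let R1 : G → G → G := fun x y => x * (y * x⁻¹) ^ (n + 1)
    let R2 : G → G → G := fun x y => x * (y⁻¹ * x) ^ n
    ∀ x y z : G,
      star (R1 (sbar x y) z) y = R1 x (star z y) ∧
      R2 (sbar x y) z = sbar (R2 x (star z y)) y ∧
      star (sbar y (R1 x z)) x = sbar (star y (R2 x z)) z ∧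
      R2 x y = R1 y (star x y) ∧
      star (R1 x y) (R2 x y) = R2 y (star x y) := by
  intro star sbar R1 R2 x y z
  refine ⟨?_, ?_, ConjSingquandle.inv_mul_R1_conj_eq_mul_inv_R2_conj n x y z,
    ConjSingquandle.R2_eq_R1_conj n x y, ConjSingquandle.R2_inv_mul_R1_mul_R2 n x y⟩
  · have h := ConjSingquandle.conj_R1 n y⁻¹ (y * x * y⁻¹) z
    rwa [inv_inv, show y⁻¹ * (y * x * y⁻¹) * y = x by group] at h
  · have h := ConjSingquandle.conj_R2 n y x (y⁻¹ * z * y)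
    rw [show y * (y⁻¹ * z * y) * y⁻¹ = z by group] at h
    exact h.symm

theorem stmt_10 (G : Type*) [Group G] (n : ℕ) (hn : 1 ≤ n) :
    let star : G → G → G := fun x y => y⁻¹ * x * y
    let sbar : G → G → G := fun x y => y * x * y⁻¹
    let R1 : G → G → G := fun x y => x * (y * x⁻¹) ^ (n + 1)
    let R2 : G → G → G := fun x y => x * (y⁻¹ * x) ^ n
    ∀ x y z : G,
      star (R1 (sbar x y) z) y = R1 x (star z y) ∧
      R2 (sbar x y) z = sbar (R2 x (star z y)) y ∧
      star (sbar y (R1 x z)) x = sbar (star y (R2 x z)) z ∧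
      R2 x y = R1 y (star x y) ∧
      star (R1 x y) (R2 x y) = R2 y (star x y) :=
  stmt_10_general G n
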